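/- arXiv:2209.04201 — 3 statements merged into one kernel-verified Lean document; each statement's English description precedes it below -/
import Mathlib

section
/- Let n be odd, n ≥ 5, m ≥ 4, and let G''(t) be the subgraph of G_{m,n} = S_m □ P_n induced by the two stars S_m × {u_t} and S_m × {u_{t+(n−1)/2}} (with both indices in {1,…,n}). Any radio labeling of G_{m,n} restricted to the 2m vertices of G''(t) (using distances and diameter of G_{m,n}) has span at least mn + m − (n−3)/2. -/
/-!
Put `r = (n-1)/2` and `k = n - r`. Two vertices of `G''(t)` are at distance at most `r + 2`,
minus one for each of them that is the centre of its star, so a radio labeling separates any two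
of the `2m` labels by at least `k` plus one for every centre among the two vertices. Listing the
labels in increasing order, the span is the sum of the `2m - 1` consecutive gaps, and each of the
two centres adds `1` to both gaps around it unless it carries the smallest or the largest label.
Hence the span is at least `(2m - 1) k + 2`, which equals `mn + m - (n-3)/2` for odd `n`.
-/

open SimpleGraph

/-- The star graph on `m` vertices: vertex `0` is the center, adjacent to all others. -/
def starGraph (m : ℕ) : SimpleGraph (Fin m) :=
  SimpleGraph.fromRel (fun a _ => (a : ℕ) = 0)

/-- The stacked-book graph `G_{m,n} = S_m □ P_n`. -/
def stackedBook (m n : ℕ) : SimpleGraph (Fin m × Fin n) :=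
  starGraph m □ SimpleGraph.pathGraph n

/-- A radio labeling of `G`: `|f u - f v| ≥ diam G + 1 - d(u,v)` for all distinct `u, v`. -/
def IsRadioLabeling {V : Type*} (G : SimpleGraph V) (f : V → ℕ) : Prop :=
  ∀ u v : V, u ≠ v → (G.diam : ℤ) + 1 - G.dist u v ≤ |(f u : ℤ) - (f v : ℤ)|

/-- The span of a labeling on a finite vertex set: max label minus min label. -/
noncomputable def labelSpan {V : Type*} [Fintype V] (f : V → ℕ) : ℕ :=
  Finset.univ.sup f - sInf (Set.range f)

/-- The radio number: minimum span over all radio labelings. -/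
noncomputable def radioNumber {V : Type*} [Fintype V] (G : SimpleGraph V) : ℕ :=
  sInf {s | ∃ f : V → ℕ, IsRadioLabeling G f ∧ labelSpan f = s}

theorem Finset.exists_extremes_of_weighted_gap {α : Type*} [DecidableEq α] (S : Finset α)
    (f w : α → ℤ) (k : ℤ) (hS : S.Nonempty)
    (hgap : ∀ u ∈ S, ∀ v ∈ S, u ≠ v → k + w u + w v ≤ |f u - f v|) :
    ∃ lo ∈ S, ∃ hi ∈ S, (∀ x ∈ S, f lo ≤ f x ∧ f x ≤ f hi) ∧
      ((S.card : ℤ) - 1) * k + 2 * ∑ x ∈ S, w x ≤ f hi - f lo + w lo + w hi := by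
  induction S using Finset.induction_on_max_value f with
  | empty => exact absurd hS Finset.not_nonempty_empty
  | insert a s ha hmax ih =>
    rcases s.eq_empty_or_nonempty with rfl | hs
    · exact ⟨a, by simp, a, by simp, by simp, by simp [two_mul]⟩
    obtain ⟨lo, hlo, hi, hhi, hext, hbound⟩ :=
      ih hs fun u hu v hv => hgap u (mem_insert_of_mem hu) v (mem_insert_of_mem hv)
    have hstep : k + w hi + w a ≤ f a - f hi := by
      have := hgap hi (mem_insert_of_mem hhi) a (mem_insert_self a s) (by rintro rfl; exact ha hhi)
      rwa [abs_sub_comm, abs_of_nonneg (sub_nonneg.mpr (hmax hi hhi))] at this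
    refine ⟨lo, mem_insert_of_mem hlo, a, mem_insert_self a s, ?_, ?_⟩
    · simp only [mem_insert, forall_eq_or_imp]
      exact ⟨⟨(hext hi hhi).1.trans (hmax hi hhi), le_rfl⟩,
        fun x hx => ⟨(hext x hx).1, hmax x hx⟩⟩
    · rw [card_insert_of_notMem ha, sum_insert ha]
      push_cast
      linarith

namespace SimpleGraph

variable {V : Type*} {G : SimpleGraph V}

theorem Reachable.sub_le_dist_of_adj_le (φ : V → ℤ) (hφ : ∀ x y, G.Adj x y → φ x ≤ φ y + 1)
    {u v : V} (huv : G.Reachable u v) : φ u - φ v ≤ G.dist u v := by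
  obtain ⟨p, hp⟩ := huv.exists_walk_length_eq_dist
  rw [← hp]
  clear hp huv
  induction p with
  | nil => simp
  | cons hadj p ih =>
    have := hφ _ _ hadj
    rw [Walk.length_cons]
    push_cast
    linarith

theorem pathGraph_dist_le {n : ℕ} (d : ℕ) {x y : Fin n} (hxy : (y : ℕ) = x + d) :
    (pathGraph n).dist x y ≤ d := by
  induction d generalizing x with
  | zero => simp [Fin.ext (by omega : (x : ℕ) = y)]
  | succ d ih =>
    let x' : Fin n := ⟨x + 1, by omega⟩
    have hadj : (pathGraph n).Adj x x' := pathGraph_adj.mpr (Or.inl rfl)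
    calc (pathGraph n).dist x y ≤ (pathGraph n).dist x x' + (pathGraph n).dist x' y :=
          (pathGraph_preconnected n x x').dist_triangle_left y
      _ ≤ 1 + d := by
          rw [dist_eq_one_iff_adj.mpr hadj]
          exact Nat.add_le_add_left (ih (by simp [x']; omega)) 1
      _ = d + 1 := add_comm 1 d

theorem pathGraph_dist (n : ℕ) (x y : Fin n) :
    ((pathGraph n).dist x y : ℤ) = |(x : ℤ) - y| := by
  apply le_antisymm
  · rcases le_total (x : ℕ) y with h | h
    · have := pathGraph_dist_le (y - x) (x := x) (y := y) (by omega)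
      rw [abs_of_nonpos (by omega)]
      omega
    · have := pathGraph_dist_le (x - y) (x := y) (y := x) (by omega)
      rw [dist_comm] at this
      rw [abs_of_nonneg (by omega)]
      omega
  · have hadj : ∀ a b : Fin n, (pathGraph n).Adj a b → (a : ℤ) ≤ b + 1 ∧ (b : ℤ) ≤ a + 1 :=
      fun a b h => by rw [pathGraph_adj] at h; omega
    have hup := (pathGraph_preconnected n x y).sub_le_dist_of_adj_le (fun a : Fin n => (a : ℤ))
      fun a b h => (hadj a b h).1
    have hdown := (pathGraph_preconnected n x y).sub_le_dist_of_adj_le (fun a : Fin n => -(a : ℤ))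
      fun a b h => by linarith [hadj a b h]
    exact abs_sub_le_iff.mpr ⟨hup, by linarith⟩

theorem dist_starGraph_of_ne_center {r x y : V} (hxy : x ≠ y) (hx : x ≠ r) (hy : y ≠ r) :
    (starGraph r).dist x y = 2 := by
  apply le_antisymm
  · exact dist_le (.cons (starGraph_center_adj' hx.symm) (.cons (starGraph_center_adj hy.symm) .nil))
  · exact (connected_starGraph r).one_lt_dist_of_ne_of_not_adj hxy (by simp [hx, hy])

theorem dist_starGraph_add_indicator_le [DecidableEq V] (r x y : V) :
    (starGraph r).dist x y + (if x = r then 1 else 0) + (if y = r then 1 else 0) ≤ 2 := by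
  by_cases hxy : x = y
  · subst hxy
    split_ifs <;> simp
  by_cases hadj : (starGraph r).Adj x y
  · rw [dist_eq_one_iff_adj.mpr hadj]
    rw [starGraph_adj] at hadj
    split_ifs <;> simp_all
  · have hx : x ≠ r := fun hx => hadj (starGraph_adj.mpr ⟨hxy, Or.inl hx⟩)
    have hy : y ≠ r := fun hy => hadj (starGraph_adj.mpr ⟨hxy, Or.inr hy⟩)
    simp [dist_starGraph_of_ne_center hxy hx hy, hx, hy]

theorem dist_boxProd {W : Type*} {H : SimpleGraph W} (hG : G.Preconnected) (hH : H.Preconnected)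
    (p q : V × W) : (G □ H).dist p q = G.dist p.1 q.1 + H.dist p.2 q.2 := by
  have hbox : (G □ H).Reachable p q := reachable_boxProd.mpr ⟨hG p.1 q.1, hH p.2 q.2⟩
  have := hbox.coe_dist_eq_edist
  rw [edist_boxProd, ← (hG p.1 q.1).coe_dist_eq_edist, ← (hH p.2 q.2).coe_dist_eq_edist] at this
  exact_mod_cast this

end SimpleGraph

theorem starGraph_eq_starGraph_zero {m : ℕ} (hm : 0 < m) :
    _root_.starGraph m = SimpleGraph.starGraph (⟨0, hm⟩ : Fin m) := by
  ext i j
  simp [_root_.starGraph, Fin.ext_iff]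

theorem stackedBook_eq {m : ℕ} (hm : 0 < m) (n : ℕ) :
    stackedBook m n = SimpleGraph.starGraph (⟨0, hm⟩ : Fin m) □ pathGraph n := by
  rw [stackedBook, starGraph_eq_starGraph_zero hm]

theorem stackedBook_dist {m n : ℕ} (hm : 0 < m) (p q : Fin m × Fin n) :
    (stackedBook m n).dist p q =
      (SimpleGraph.starGraph (⟨0, hm⟩ : Fin m)).dist p.1 q.1 + (pathGraph n).dist p.2 q.2 := by
  rw [stackedBook_eq hm,
    dist_boxProd (connected_starGraph _).preconnected (pathGraph_preconnected n)]

theorem add_one_le_diam_stackedBook {m n : ℕ} (hm : 3 ≤ m) (hn : 0 < n) :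
    n + 1 ≤ (stackedBook m n).diam := by
  have : Nonempty (Fin m × Fin n) := ⟨(⟨0, by omega⟩, ⟨0, hn⟩)⟩
  have hconn : (stackedBook m n).Connected := by
    rw [stackedBook_eq (by omega)]
    exact ⟨(connected_starGraph _).preconnected.boxProd (pathGraph_preconnected n)⟩
  let u : Fin m × Fin n := (⟨1, by omega⟩, ⟨0, hn⟩)
  let v : Fin m × Fin n := (⟨2, by omega⟩, ⟨n - 1, by omega⟩)
  have hdist : (stackedBook m n).dist u v = n + 1 := by
    have hpath := pathGraph_dist n u.2 v.2
    rw [stackedBook_dist (by omega), dist_starGraph_of_ne_center (by simp [u, v]) (by simp [u])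
      (by simp [v])]
    simp only [u, v, Nat.cast_zero, zero_sub, abs_neg, Nat.abs_cast] at hpath ⊢
    omega
  exact hdist ▸ dist_le_diam (connected_iff_ediam_ne_top.mp hconn)

/-- The vertex set of `G''(t)` when `a = u_t` and `b = u_{t+(n-1)/2}`. -/
def twoStars (m : ℕ) {n : ℕ} (a b : Fin n) : Finset (Fin m × Fin n) :=
  Finset.univ ×ˢ {a, b}

def centerWeight {m n : ℕ} (p : Fin m × Fin n) : ℤ :=
  if (p.1 : ℕ) = 0 then 1 else 0

theorem IsRadioLabeling.weighted_gap_twoStars {m n : ℕ} {f : Fin m × Fin n → ℕ}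
    (hf : IsRadioLabeling (stackedBook m n) f) (hm : 3 ≤ m) {a b : Fin n} {p q : Fin m × Fin n}
    (hp : p ∈ twoStars m a b) (hq : q ∈ twoStars m a b) (hpq : p ≠ q) :
    (n - (pathGraph n).dist a b : ℤ) + centerWeight p + centerWeight q ≤ |(f p : ℤ) - f q| := by
  have hm0 : 0 < m := by omega
  have hradio := hf p q hpq
  rw [stackedBook_dist hm0] at hradio
  have hdiam : (n : ℤ) + 1 ≤ (stackedBook m n).diam := by
    exact_mod_cast add_one_le_diam_stackedBook hm a.pos
  have hstar : ((SimpleGraph.starGraph (⟨0, hm0⟩ : Fin m)).dist p.1 q.1 : ℤ)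
      + centerWeight p + centerWeight q ≤ 2 := by
    have := dist_starGraph_add_indicator_le (⟨0, hm0⟩ : Fin m) p.1 q.1
    simp only [centerWeight, Fin.ext_iff] at this ⊢
    split_ifs at this ⊢ <;> omega
  have hcol : ((pathGraph n).dist p.2 q.2 : ℤ) ≤ (pathGraph n).dist a b := by
    simp only [twoStars, Finset.mem_product, Finset.mem_insert, Finset.mem_singleton] at hp hq
    rcases hp.2 with hp | hp <;> rcases hq.2 with hq | hq <;> simp [hp, hq, dist_comm]
  push_cast at hradio
  linarith

theorem IsRadioLabeling.exists_extremes_twoStars {m n : ℕ} {f : Fin m × Fin n → ℕ}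
    (hf : IsRadioLabeling (stackedBook m n) f) (hm : 3 ≤ m) {a b : Fin n} (hab : a ≠ b) :
    ∃ lo ∈ twoStars m a b, ∃ hi ∈ twoStars m a b,
      (∀ x ∈ twoStars m a b, f lo ≤ f x ∧ f x ≤ f hi) ∧
      (2 * m - 1 : ℤ) * (n - (pathGraph n).dist a b) + 2 ≤ (f hi : ℤ) - f lo := by
  have hm0 : 0 < m := by omega
  have hcard : (twoStars m a b).card = 2 * m := by
    simp [twoStars, Finset.card_pair hab, mul_comm]
  have hsum : ∑ p ∈ twoStars m a b, centerWeight p = 2 := by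
    rw [twoStars, Finset.sum_product]
    have hcenter : (Finset.univ.filter fun i : Fin m => (i : ℕ) = 0).card = 1 :=
      Finset.card_eq_one.mpr ⟨⟨0, hm0⟩, by ext; simp [Fin.ext_iff]⟩
    simp [centerWeight, Finset.sum_pair hab, Finset.sum_add_distrib, hcenter]
  have hw : ∀ p : Fin m × Fin n, centerWeight p ≤ 1 := fun p => by
    unfold centerWeight
    split_ifs <;> norm_num
  obtain ⟨lo, hlo, hi, hhi, hext, hbound⟩ := (twoStars m a b).exists_extremes_of_weighted_gap
    (fun p => (f p : ℤ)) centerWeight _ ⟨(⟨0, hm0⟩, a), by simp [twoStars]⟩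
    fun p hp q hq hpq => hf.weighted_gap_twoStars hm hp hq hpq
  refine ⟨lo, hlo, hi, hhi, fun x hx => by exact_mod_cast hext x hx, ?_⟩
  rw [hcard, hsum] at hbound
  push_cast at hbound
  linarith [hw lo, hw hi]

theorem mul_add_sub_le_sub_of_le {m n d lo hi : ℕ} (hm : 1 ≤ m) (hn : 3 ≤ n)
    (hd : d ≤ (n - 1) / 2) (h : (2 * m - 1 : ℤ) * (n - d) + 2 ≤ (hi : ℤ) - lo) :
    m * n + m - (n - 3) / 2 ≤ hi - lo := by
  set r := (n - 1) / 2
  have hmono : (2 * m - 1 : ℤ) * (n - r) ≤ (2 * m - 1) * (n - d) :=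
    mul_le_mul_of_nonneg_left (by omega) (by omega)
  have hpos : (0 : ℤ) ≤ (2 * m - 1) * (n - r) := mul_nonneg (by omega) (by omega)
  have hsub : r - 1 ≤ m * n + m := by
    have := Nat.le_mul_of_pos_left n hm
    omega
  rw [(by omega : (n - 3) / 2 = r - 1)]
  zify [hsub, (by omega : lo ≤ hi), (by omega : 1 ≤ r)]
  rcases (by omega : (n : ℤ) = 2 * r + 1 ∨ (n : ℤ) = 2 * r + 2) with hn | hn <;>
    rw [hn] at hmono ⊢ <;> nlinarith

theorem stmt6_general (m n t : ℕ) (hm : 4 ≤ m) (hn : 5 ≤ n)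
    (ht2 : t + (n - 1) / 2 ≤ n)
    (f : Fin m × Fin n → ℕ) (hf : IsRadioLabeling (stackedBook m n) f) :
    m * n + m - (n - 3) / 2 ≤
      sSup (f '' {p : Fin m × Fin n |
          (p.2 : ℕ) = t - 1 ∨ (p.2 : ℕ) = t + (n - 1) / 2 - 1}) -
      sInf (f '' {p : Fin m × Fin n |
          (p.2 : ℕ) = t - 1 ∨ (p.2 : ℕ) = t + (n - 1) / 2 - 1}) := by
  set r := (n - 1) / 2
  let a : Fin n := ⟨t - 1, by omega⟩
  let b : Fin n := ⟨t + r - 1, by omega⟩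
  have hab : a ≠ b := by
    simp only [a, b, ne_eq, Fin.ext_iff]
    omega
  have hdist : (pathGraph n).dist a b ≤ r := by
    have := pathGraph_dist n a b
    have habs : |(a : ℤ) - b| ≤ r := by
      rw [abs_le]
      simp only [a, b]
      omega
    omega
  have hcols : {p : Fin m × Fin n | (p.2 : ℕ) = t - 1 ∨ (p.2 : ℕ) = t + r - 1} =
      ↑(twoStars m a b) := by
    ext p
    simp [twoStars, a, b, Fin.ext_iff]
  obtain ⟨lo, hlo, hi, hhi, hext, hspan⟩ := hf.exists_extremes_twoStars (by omega) hab
  rw [hcols, IsGreatest.csSup_eq ⟨Set.mem_image_of_mem f hhi, ?_⟩,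
    IsLeast.csInf_eq ⟨Set.mem_image_of_mem f hlo, ?_⟩]
  · exact mul_add_sub_le_sub_of_le (by omega) (by omega) hdist hspan
  · rintro _ ⟨x, hx, rfl⟩
    exact (hext x hx).1
  · rintro _ ⟨x, hx, rfl⟩
    exact (hext x hx).2

/-- any radio labeling of `G_{m,n}` restricted to the `2m` vertices of the
subgraph `G''(t)` (the stars at 1-based indices `t` and `t + (n-1)/2`) has span at least
`mn + m - (n-3)/2`. -/
theorem stmt6 (m n t : ℕ) (hm : 4 ≤ m) (hn : 5 ≤ n) (ho : Odd n)
    (ht1 : 1 ≤ t) (ht2 : t + (n - 1) / 2 ≤ n)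
    (f : Fin m × Fin n → ℕ) (hf : IsRadioLabeling (stackedBook m n) f) :
    m * n + m - (n - 3) / 2 ≤
      sSup (f '' {p : Fin m × Fin n |
          (p.2 : ℕ) = t - 1 ∨ (p.2 : ℕ) = t + (n - 1) / 2 - 1}) -
      sInf (f '' {p : Fin m × Fin n |
          (p.2 : ℕ) = t - 1 ∨ (p.2 : ℕ) = t + (n - 1) / 2 - 1}) :=
  stmt6_general m n t hm hn ht2 f hf
end

section
/- For the path P_n with n = 2k ≥ 4 vertices, the radio number satisfies rn(P_n) = 2k(k−1) + 1. -/
open SimpleGraph Finset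

lemma pg_walk_ge {n : ℕ} {u v : Fin n} (w : (SimpleGraph.pathGraph n).Walk u v) :
    (u.val : ℤ) - v.val ≤ w.length ∧ (v.val : ℤ) - u.val ≤ w.length := by
  induction w with
  | nil => simp
  | @cons a b c h p ih =>
    rw [SimpleGraph.pathGraph_adj] at h
    simp only [SimpleGraph.Walk.length_cons]
    push_cast
    omega

lemma pg_walk_exists {n : ℕ} : ∀ (d : ℕ) (u v : Fin n), u.val + d = v.val →
    ∃ w : (SimpleGraph.pathGraph n).Walk u v, w.length = d := by
  intro d
  induction d with
  | zero =>
    intro u v h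
    have : u = v := Fin.ext (by omega)
    subst this
    exact ⟨SimpleGraph.Walk.nil, rfl⟩
  | succ d ih =>
    intro u v h
    have hu1 : u.val + 1 < n := by have := v.isLt; omega
    have ha : (SimpleGraph.pathGraph n).Adj u ⟨u.val + 1, hu1⟩ :=
      SimpleGraph.pathGraph_adj.mpr (Or.inl rfl)
    obtain ⟨w, hw⟩ := ih ⟨u.val + 1, hu1⟩ v (by simp; omega)
    exact ⟨SimpleGraph.Walk.cons ha w, by simp [hw]⟩

lemma pg_connected {n : ℕ} (hn : 0 < n) : (SimpleGraph.pathGraph n).Connected := by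
  have := SimpleGraph.pathGraph_connected (n - 1)
  rwa [show n - 1 + 1 = n by omega] at this

lemma pg_edist {n : ℕ} (u v : Fin n) (h : u.val ≤ v.val) :
    (SimpleGraph.pathGraph n).edist u v = ((v.val - u.val : ℕ) : ℕ∞) := by
  apply le_antisymm
  · obtain ⟨w, hw⟩ := pg_walk_exists (v.val - u.val) u v (by omega)
    exact hw ▸ SimpleGraph.edist_le w
  · have hconn : (SimpleGraph.pathGraph n).Connected := pg_connected (by have := v.isLt; omega)
    obtain ⟨w, hw⟩ := hconn.exists_walk_length_eq_edist u v
    rw [← hw]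
    have h1 := (pg_walk_ge w).2
    have h2 : v.val - u.val ≤ w.length := by omega
    exact_mod_cast Nat.cast_le.mpr h2

lemma pg_dist {n : ℕ} (u v : Fin n) (h : u.val ≤ v.val) :
    (SimpleGraph.pathGraph n).dist u v = v.val - u.val := by
  rw [SimpleGraph.dist, pg_edist u v h, ENat.toNat_coe]

lemma pg_dist_int {n : ℕ} (u v : Fin n) :
    (((SimpleGraph.pathGraph n).dist u v : ℕ) : ℤ) = |(u.val : ℤ) - v.val| := by
  rcases le_total u.val v.val with h | h
  · rw [pg_dist u v h, abs_of_nonpos (by omega : (u.val : ℤ) - v.val ≤ 0)]; omega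
  · rw [SimpleGraph.dist_comm, pg_dist v u h, abs_of_nonneg (by omega : (0:ℤ) ≤ (u.val : ℤ) - v.val)]; omega

lemma pg_ediam {k : ℕ} (hk : 2 ≤ k) :
    (SimpleGraph.pathGraph (2 * k)).ediam = ((2 * k - 1 : ℕ) : ℕ∞) := by
  apply le_antisymm
  · apply SimpleGraph.ediam_le_of_edist_le
    intro u v
    rcases le_total u.val v.val with h | h
    · rw [pg_edist u v h]
      exact Nat.cast_le.mpr (by have := v.isLt; omega)
    · rw [SimpleGraph.edist_comm, pg_edist v u h]
      exact Nat.cast_le.mpr (by have := u.isLt; omega)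
  · have h0 := pg_edist (⟨0, by omega⟩ : Fin (2 * k)) ⟨2 * k - 1, by omega⟩ (by simp)
    calc ((2 * k - 1 : ℕ) : ℕ∞) = (SimpleGraph.pathGraph (2 * k)).edist ⟨0, by omega⟩ ⟨2 * k - 1, by omega⟩ := by
          rw [h0]; norm_num
      _ ≤ _ := SimpleGraph.edist_le_ediam

lemma pg_diam {k : ℕ} (hk : 2 ≤ k) :
    (SimpleGraph.pathGraph (2 * k)).diam = 2 * k - 1 := by
  rw [SimpleGraph.diam, pg_ediam hk, ENat.toNat_coe]

/-- value of the optimal labeling, over ℤ -/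
def Fz (k x : ℤ) : ℤ :=
  if x < k then (2*k-1)*(k-1-x) else (2*k-1)*(2*k-1-x)+k

lemma key' {k a b : ℤ} (hk : 2 ≤ k) (hab : a < b) (ha : 0 ≤ a) (hb' : b < 2*k) :
    2*k - (b - a) ≤ |Fz k a - Fz k b| := by
  unfold Fz
  split_ifs with h1 h2 h2
  · -- a < k, b < k
    rw [show (2*k-1)*(k-1-a) - ((2*k-1)*(k-1-b)) = (2*k-1)*(b-a) by ring,
      abs_of_nonneg (by nlinarith)]
    nlinarith [mul_nonneg (show (0:ℤ) ≤ 2*k by linarith) (show (0:ℤ) ≤ b - a - 1 by linarith)]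
  · -- a < k ≤ b
    rw [show (2*k-1)*(k-1-a) - ((2*k-1)*(2*k-1-b)+k) = (2*k-1)*(b-a-k) - k by ring]
    rcases le_or_gt (b - a) k with ht | ht
    · -- t ≤ 0
      rw [abs_of_nonpos (by nlinarith)]
      nlinarith [mul_nonneg (show (0:ℤ) ≤ 2*k-2 by linarith) (show (0:ℤ) ≤ k - (b-a) by linarith)]
    · -- t ≥ 1
      rw [abs_of_nonneg (by nlinarith)]
      nlinarith [mul_nonneg (show (0:ℤ) ≤ 2*k by linarith) (show (0:ℤ) ≤ b - a - k - 1 by linarith)]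
  · -- k ≤ a, b < k : impossible
    omega
  · -- k ≤ a, k ≤ b
    rw [show (2*k-1)*(2*k-1-a)+k - ((2*k-1)*(2*k-1-b)+k) = (2*k-1)*(b-a) by ring,
      abs_of_nonneg (by nlinarith)]
    nlinarith [mul_nonneg (show (0:ℤ) ≤ 2*k by linarith) (show (0:ℤ) ≤ b - a - 1 by linarith)]

lemma key {k a b : ℤ} (hk : 2 ≤ k) (hne : a ≠ b) (ha : 0 ≤ a) (hb : 0 ≤ b)
    (ha' : a < 2*k) (hb' : b < 2*k) :
    2*k - |a - b| ≤ |Fz k a - Fz k b| := by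
  rcases hne.lt_or_gt with h | h
  · rw [abs_of_nonpos (by omega)]
    have := key' hk h ha hb'
    omega
  · rw [abs_of_nonneg (by omega), abs_sub_comm]
    have := key' hk h hb ha'
    omega

/-- Level function on the path `P_{2k}`, as an integer. -/
def Lz (k : ℕ) (v : Fin (2*k)) : ℤ :=
  if v.val < k then (k:ℤ)-1-v.val else (v.val:ℤ)-k

lemma Lz_nonneg {k : ℕ} (v : Fin (2*k)) : 0 ≤ Lz k v := by
  unfold Lz; split_ifs <;> omega

lemma Lz_lt {k : ℕ} (v : Fin (2*k)) : Lz k v ≤ (k:ℤ) - 1 := by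
  have := v.isLt; unfold Lz; split_ifs <;> omega

lemma sum_Lz {k : ℕ} (hk : 2 ≤ k) : ∑ v : Fin (2*k), Lz k v = (k:ℤ)*(k-1) := by
  have h1 : ∑ v : Fin (2*k), Lz k v
      = ∑ i ∈ range (2*k), (if i < k then (k:ℤ)-1-i else (i:ℤ)-k) :=
    by simp only [Lz]; exact Fin.sum_univ_eq_sum_range (fun i => if i < k then (k:ℤ)-1-i else (i:ℤ)-k) (2*k)
  rw [h1, range_eq_Ico, ← Finset.sum_Ico_consecutive _ (Nat.zero_le k) (by omega : k ≤ 2*k)]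
  rw [← range_eq_Ico]
  have h2 : ∑ i ∈ range k, (if i < k then (k:ℤ)-1-i else (i:ℤ)-k)
      = ∑ i ∈ range k, ((k:ℤ)-1-i) := by
    apply Finset.sum_congr rfl
    intro i hi
    rw [if_pos (Finset.mem_range.mp hi)]
  have h3 : ∑ i ∈ Finset.Ico k (2*k), (if i < k then (k:ℤ)-1-i else (i:ℤ)-k)
      = ∑ i ∈ range k, (i:ℤ) := by
    rw [Finset.sum_Ico_eq_sum_range]
    have : 2*k - k = k := by omega
    rw [this]
    apply Finset.sum_congr rfl
    intro i _
    rw [if_neg (by omega)]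
    push_cast; ring
  rw [h2, h3, Finset.sum_sub_distrib, Finset.sum_const, Finset.card_range]
  ring

lemma dist_le_Lz {k : ℕ} (u v : Fin (2*k)) :
    (((SimpleGraph.pathGraph (2*k)).dist u v : ℕ) : ℤ) ≤ Lz k u + Lz k v + 1 := by
  rw [pg_dist_int, abs_le]
  have hu := u.isLt; have hv := v.isLt
  constructor <;> (unfold Lz; split_ifs <;> omega)

lemma lowerBound {k : ℕ} (hk : 2 ≤ k) (f : Fin (2*k) → ℕ)
    (hf : IsRadioLabeling (SimpleGraph.pathGraph (2*k)) f) :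
    2*k*(k-1)+1 ≤ labelSpan f := by
  have hdiam := pg_diam hk
  have hdistle : ∀ u v : Fin (2*k), (SimpleGraph.pathGraph (2*k)).dist u v ≤ 2*k-1 := by
    intro u v
    rcases le_total u.val v.val with h | h
    · rw [pg_dist u v h]; have := v.isLt; omega
    · rw [SimpleGraph.dist_comm, pg_dist v u h]; have := u.isLt; omega
  have hinj : Function.Injective f := by
    intro u v h
    by_contra hne
    have h2 := hf u v hne
    rw [hdiam, h, sub_self, abs_zero] at h2
    have h3 := hdistle u v
    omega
  set σ := Tuple.sort f with hσ
  have hmono : Monotone (f ∘ σ) := Tuple.monotone_sort f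
  have hsm : StrictMono (f ∘ σ) := hmono.strictMono_of_injective (hinj.comp σ.injective)
  have hpos : 0 < 2*k := by omega
  set x : ℕ → Fin (2*k) := fun i => σ ⟨i % (2*k), Nat.mod_lt i hpos⟩ with hx
  have hxeq : ∀ i : Fin (2*k), x i.val = σ i := by
    intro i
    simp only [hx, Nat.mod_eq_of_lt i.isLt, Fin.eta]
  have hxlt : ∀ i j : ℕ, i < j → j < 2*k → f (x i) < f (x j) := by
    intro i j hij hj
    apply hsm
    show (⟨i % (2*k), _⟩ : Fin (2*k)) < ⟨j % (2*k), _⟩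
    rw [Fin.lt_def]
    simp only [Nat.mod_eq_of_lt (by omega : i < 2*k), Nat.mod_eq_of_lt hj]
    exact hij
  have hgap : ∀ i : ℕ, i + 1 < 2*k →
      2*(k:ℤ) - 1 - Lz k (x i) - Lz k (x (i+1)) ≤ (f (x (i+1)) : ℤ) - f (x i) := by
    intro i hi
    have hlt := hxlt i (i+1) (by omega) hi
    have hne : x (i+1) ≠ x i := fun h => by rw [h] at hlt; omega
    have h2 := hf (x (i+1)) (x i) hne
    rw [hdiam] at h2
    have h3 := dist_le_Lz (x (i+1)) (x i)
    rw [abs_of_nonneg (show (0:ℤ) ≤ (f (x (i+1)) : ℤ) - f (x i) by omega)] at h2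
    have hc : ((2*k-1 : ℕ):ℤ) = 2*(k:ℤ)-1 := by omega
    rw [hc] at h2
    linarith
  have htel : ∑ i ∈ Finset.range (2*k-1), ((f (x (i+1)) : ℤ) - f (x i))
      = (f (x (2*k-1)) : ℤ) - f (x 0) := Finset.sum_range_sub (fun i => (f (x i) : ℤ)) (2*k-1)
  have hsum1 : ∑ i ∈ Finset.range (2*k), Lz k (x i) = (k:ℤ)*(k-1) := by
    have h1 : ∑ i ∈ Finset.range (2*k), Lz k (x i) = ∑ i : Fin (2*k), Lz k (σ i) := by
      rw [← Fin.sum_univ_eq_sum_range (fun i => Lz k (x i)) (2*k)]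
      exact Finset.sum_congr rfl (fun i _ => by rw [hxeq i])
    rw [h1, Equiv.sum_comp σ (Lz k), sum_Lz hk]
  have hsub1 : ∑ i ∈ Finset.range (2*k-1), Lz k (x i) ≤ (k:ℤ)*(k-1) := by
    rw [← hsum1]
    exact Finset.sum_le_sum_of_subset_of_nonneg (Finset.range_subset_range.mpr (by omega))
      (fun i _ _ => Lz_nonneg _)
  have hsub2 : ∑ i ∈ Finset.range (2*k-1), Lz k (x (i+1)) ≤ (k:ℤ)*(k-1) := by
    rw [← hsum1]
    have h1 : ∑ i ∈ Finset.range (2*k-1), Lz k (x (i+1))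
        = ∑ j ∈ Finset.Ico 1 (2*k), Lz k (x j) := by
      rw [Finset.sum_Ico_eq_sum_range]
      exact Finset.sum_congr rfl (fun i _ => by rw [Nat.add_comm])
    rw [h1]
    apply Finset.sum_le_sum_of_subset_of_nonneg
    · intro j hj
      simp only [Finset.mem_Ico] at hj
      exact Finset.mem_range.mpr hj.2
    · exact fun i _ _ => Lz_nonneg _
  have hmain : (k:ℤ)*(2*(k:ℤ)-2) + 1 ≤ (f (x (2*k-1)) : ℤ) - f (x 0) := by
    rw [← htel]
    have hstep : ∑ i ∈ Finset.range (2*k-1), (2*(k:ℤ) - 1 - Lz k (x i) - Lz k (x (i+1)))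
        ≤ ∑ i ∈ Finset.range (2*k-1), ((f (x (i+1)) : ℤ) - f (x i)) :=
      Finset.sum_le_sum (fun i hi => hgap i (by have := Finset.mem_range.mp hi; omega))
    refine le_trans ?_ hstep
    have hlhs : ∑ i ∈ Finset.range (2*k-1), (2*(k:ℤ) - 1 - Lz k (x i) - Lz k (x (i+1)))
        = ((2*k-1 : ℕ) : ℤ)*(2*(k:ℤ)-1) - (∑ i ∈ Finset.range (2*k-1), Lz k (x i))
          - (∑ i ∈ Finset.range (2*k-1), Lz k (x (i+1))) := by
      rw [Finset.sum_sub_distrib, Finset.sum_sub_distrib, Finset.sum_const,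
        Finset.card_range, nsmul_eq_mul]
    rw [hlhs]
    have hc : ((2*k-1 : ℕ):ℤ) = 2*(k:ℤ)-1 := by omega
    rw [hc]
    nlinarith [hsub1, hsub2]
  have hsup : Finset.univ.sup f = f (x (2*k-1)) := by
    apply le_antisymm
    · apply Finset.sup_le
      intro v _
      obtain ⟨i, rfl⟩ : ∃ i : Fin (2*k), σ i = v := ⟨σ.symm v, σ.apply_symm_apply v⟩
      rw [← hxeq i]
      rcases eq_or_lt_of_le (show i.val ≤ 2*k-1 by have := i.isLt; omega) with h | h
      · rw [h]
      · exact (hxlt i.val (2*k-1) h (by omega)).le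
    · exact Finset.le_sup (Finset.mem_univ _)
  have hinf : sInf (Set.range f) = f (x 0) := by
    apply le_antisymm
    · exact Nat.sInf_le ⟨x 0, rfl⟩
    · refine le_csInf ⟨f (x 0), x 0, rfl⟩ ?_
      rintro m ⟨v, rfl⟩
      obtain ⟨i, rfl⟩ : ∃ i : Fin (2*k), σ i = v := ⟨σ.symm v, σ.apply_symm_apply v⟩
      rw [← hxeq i]
      rcases Nat.eq_zero_or_pos i.val with h | h
      · rw [h]
      · exact (hxlt 0 i.val h i.isLt).le
  rw [labelSpan, hsup, hinf]
  have h5 : ((2*k*(k-1)+1 : ℕ) : ℤ) ≤ (f (x (2*k-1)) : ℤ) - f (x 0) := by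
    refine le_trans (le_of_eq ?_) hmain
    push_cast [Nat.cast_sub (show 1 ≤ k by omega)]
    ring
  omega

/-- The optimal radio labeling of `P_{2k}`. -/
def FF (k : ℕ) : Fin (2*k) → ℕ := fun v =>
  if v.val < k then (2*k-1)*(k-1-v.val) else (2*k-1)*(2*k-1-v.val)+k

lemma FF_cast {k : ℕ} (hk : 2 ≤ k) (v : Fin (2*k)) : (FF k v : ℤ) = Fz k v.val := by
  have hv := v.isLt
  unfold FF Fz
  rcases lt_or_ge v.val k with h | h
  · rw [if_pos h, if_pos (by exact_mod_cast h)]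
    have h1 : ((2*k-1 : ℕ):ℤ) = 2*(k:ℤ)-1 := by omega
    have h2 : ((k-1-v.val : ℕ):ℤ) = (k:ℤ)-1-v.val := by omega
    rw [Nat.cast_mul, h1, h2]
  · rw [if_neg (by omega), if_neg (by exact_mod_cast not_lt.mpr (by exact_mod_cast h))]
    have h1 : ((2*k-1 : ℕ):ℤ) = 2*(k:ℤ)-1 := by omega
    have h2 : ((2*k-1-v.val : ℕ):ℤ) = 2*(k:ℤ)-1-v.val := by omega
    rw [Nat.cast_add, Nat.cast_mul, h1, h2]

lemma FF_radio {k : ℕ} (hk : 2 ≤ k) : IsRadioLabeling (SimpleGraph.pathGraph (2*k)) (FF k) := by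
  intro u v huv
  rw [pg_diam hk, FF_cast hk u, FF_cast hk v]
  have hd := pg_dist_int u v
  rw [hd]
  have hc : ((2*k-1 : ℕ):ℤ) = 2*(k:ℤ)-1 := by omega
  rw [hc]
  have hne : (u.val : ℤ) ≠ (v.val : ℤ) := by
    intro h
    exact huv (Fin.ext (by exact_mod_cast h))
  have h := key (k := (k:ℤ)) (a := (u.val:ℤ)) (b := (v.val:ℤ)) (by exact_mod_cast hk) hne
    (by positivity) (by positivity) (by exact_mod_cast u.isLt) (by exact_mod_cast v.isLt)
  linarith

lemma FF_span {k : ℕ} (hk : 2 ≤ k) : labelSpan (FF k) = 2*k*(k-1)+1 := by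
  have hsup : Finset.univ.sup (FF k) = (2*k-1)*(k-1)+k := by
    apply le_antisymm
    · apply Finset.sup_le
      intro v _
      unfold FF
      split_ifs with h
      · exact le_trans (Nat.mul_le_mul_left _ (by omega)) (Nat.le_add_right _ _)
      · exact Nat.add_le_add_right (Nat.mul_le_mul_left _ (by have := v.isLt; omega)) k
    · have hFk : FF k ⟨k, by omega⟩ = (2*k-1)*(k-1)+k := by
        unfold FF
        rw [if_neg (by simp), show 2*k-1-k = k-1 by omega]
      exact hFk ▸ Finset.le_sup (Finset.mem_univ _)
  have hinf : sInf (Set.range (FF k)) = 0 := by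
    apply Nat.sInf_eq_zero.mpr
    left
    refine ⟨⟨k-1, by omega⟩, ?_⟩
    unfold FF
    rw [if_pos (by simp; omega), show k-1-(k-1) = 0 by omega, Nat.mul_zero]
  rw [labelSpan, hsup, hinf, Nat.sub_zero]
  obtain ⟨m, rfl⟩ : ∃ m, k = m + 1 := ⟨k-1, by omega⟩
  simp only [Nat.add_sub_cancel, show 2*(m+1)-1 = 2*m+1 by omega]
  ring

/-- the radio number of the even path `P_{2k}` (`k ≥ 2`) is `2k(k-1) + 1`. -/
theorem stmt9 (k : ℕ) (hk : 2 ≤ k) :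
    radioNumber (SimpleGraph.pathGraph (2 * k)) = 2 * k * (k - 1) + 1 := by
  unfold radioNumber
  apply le_antisymm
  · exact Nat.sInf_le ⟨FF k, FF_radio hk, FF_span hk⟩
  · refine le_csInf ⟨2*k*(k-1)+1, FF k, FF_radio hk, FF_span hk⟩ ?_
    rintro s ⟨f, hf, rfl⟩
    exact lowerBound hk f hf
end

section
/- Let n ≥ 5 be odd and m ≥ 3, and let G(*) be the subgraph of G_{m,n} = S_m □ P_n induced by the three stars at indices 1, (n+1)/2, and n. Any radio labeling of G_{m,n} (with respect to diam(G_{m,n}) = n+1 and distances in G_{m,n}) restricted to the 3m vertices of G(*) has span at least (2mn + 4m − n + 5)/2. -/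
open SimpleGraph

lemma starGraph_adj {m : ℕ} {a b : Fin m} :
    (_root_.starGraph m).Adj a b ↔ a ≠ b ∧ ((a : ℕ) = 0 ∨ (b : ℕ) = 0) := by
  simp [_root_.starGraph, fromRel_adj]

lemma starGraph_reachable_zero {m : ℕ} (h : 0 < m) (a : Fin m) :
    (_root_.starGraph m).Reachable a ⟨0, h⟩ := by
  by_cases ha : a = ⟨0, h⟩
  · exact ha ▸ Reachable.refl _
  · exact (_root_.starGraph_adj.mpr ⟨ha, Or.inr rfl⟩).reachable

lemma starGraph_connected {m : ℕ} (h : 0 < m) : (_root_.starGraph m).Connected := by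
  have : Nonempty (Fin m) := ⟨⟨0, h⟩⟩
  refine ⟨fun a b => ?_⟩
  exact (starGraph_reachable_zero h a).trans (starGraph_reachable_zero h b).symm

lemma starGraph_dist_le_two {m : ℕ} (h : 0 < m) (a b : Fin m) :
    (_root_.starGraph m).dist a b ≤ 2 := by
  by_cases hab : a = b
  · subst hab; rw [SimpleGraph.dist_self]; omega
  by_cases ha : (a : ℕ) = 0
  · exact le_trans (dist_le (Walk.cons (_root_.starGraph_adj.mpr ⟨hab, Or.inl ha⟩) Walk.nil)) (by simp)
  by_cases hb : (b : ℕ) = 0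
  · exact le_trans (dist_le (Walk.cons (_root_.starGraph_adj.mpr ⟨hab, Or.inr hb⟩) Walk.nil)) (by simp)
  · have hane : a ≠ ⟨0, h⟩ := by
      intro e; exact ha (by simp [e])
    have hbne : (⟨0, h⟩ : Fin m) ≠ b := by
      intro e; exact hb (by simp [← e])
    have h1 : (_root_.starGraph m).Adj a ⟨0, h⟩ := _root_.starGraph_adj.mpr ⟨hane, Or.inr rfl⟩
    have h2 : (_root_.starGraph m).Adj ⟨0, h⟩ b := _root_.starGraph_adj.mpr ⟨hbne, Or.inl rfl⟩
    exact le_trans (dist_le (Walk.cons h1 (Walk.cons h2 Walk.nil))) (by simp)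

lemma starGraph_dist_le_one {m : ℕ} {a b : Fin m} (hab : (a : ℕ) = 0 ∨ (b : ℕ) = 0) :
    (_root_.starGraph m).dist a b ≤ 1 := by
  by_cases h : a = b
  · subst h; rw [SimpleGraph.dist_self]; omega
  · exact le_trans (dist_le (Walk.cons (_root_.starGraph_adj.mpr ⟨h, hab⟩) Walk.nil)) (by simp)

lemma starGraph_two_le_dist {m : ℕ} {a b : Fin m} (h0 : 0 < m) (hab : a ≠ b)
    (ha : (a : ℕ) ≠ 0) (hb : (b : ℕ) ≠ 0) : 2 ≤ (_root_.starGraph m).dist a b := by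
  have hr : (_root_.starGraph m).Reachable a b := ((starGraph_connected h0).preconnected) a b
  have h1 : (_root_.starGraph m).dist a b ≠ 0 := (hr.pos_dist_of_ne hab).ne'
  have h2 : (_root_.starGraph m).dist a b ≠ 1 := by
    intro h
    have := dist_eq_one_iff_adj.mp h
    rw [_root_.starGraph_adj] at this
    tauto
  omega


section Path

lemma pathGraph_dist_le' {n : ℕ} (hconn : (pathGraph n).Connected) :
    ∀ (d : ℕ) (i j : Fin n), (j : ℕ) = (i : ℕ) + d → (pathGraph n).dist i j ≤ d := by
  intro d
  induction d with
  | zero => intro i j hij; have : i = j := Fin.ext (by omega); subst this; rw [dist_self]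
  | succ d ih =>
    intro i j hij
    have hi1 : (i : ℕ) + 1 < n := by have := j.isLt; omega
    set i' : Fin n := ⟨(i : ℕ) + 1, hi1⟩ with hi'
    have hadj : (pathGraph n).Adj i i' := pathGraph_adj.mpr (Or.inl rfl)
    have h1 : (pathGraph n).dist i i' ≤ 1 :=
      le_trans (dist_le (Walk.cons hadj Walk.nil)) (by simp)
    have h2 : (pathGraph n).dist i' j ≤ d := ih i' j (by simp [hi']; omega)
    calc (pathGraph n).dist i j ≤ (pathGraph n).dist i i' + (pathGraph n).dist i' j :=
          hconn.dist_triangle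
      _ ≤ 1 + d := by omega
      _ = d + 1 := by omega

lemma pathGraph_dist_le {n : ℕ} (hconn : (pathGraph n).Connected) (i j : Fin n)
    (d : ℕ) (h : (i : ℕ) ≤ (j : ℕ) ∧ (j : ℕ) - (i : ℕ) ≤ d ∨ (j : ℕ) ≤ (i : ℕ) ∧ (i : ℕ) - (j : ℕ) ≤ d) :
    (pathGraph n).dist i j ≤ d := by
  rcases h with ⟨hle, hd⟩ | ⟨hle, hd⟩
  · exact le_trans (pathGraph_dist_le' hconn ((j:ℕ) - (i:ℕ)) i j (by omega)) hd
  · rw [dist_comm]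
    exact le_trans (pathGraph_dist_le' hconn ((i:ℕ) - (j:ℕ)) j i (by omega)) hd

lemma pathGraph_walk_length {n : ℕ} :
    ∀ {i j : Fin n} (w : (pathGraph n).Walk i j), ((j : ℕ) : ℤ) - (i : ℕ) ≤ w.length := by
  intro i j w
  induction w with
  | nil => simp
  | @cons u v _ h p ih =>
    have := pathGraph_adj.mp h
    simp only [Walk.length_cons]
    push_cast
    omega

lemma pathGraph_dist_ge {n : ℕ} (i j : Fin n) (hr : (pathGraph n).Reachable i j) :
    ((j : ℕ) : ℤ) - (i : ℕ) ≤ (pathGraph n).dist i j := by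
  obtain ⟨w, hw⟩ := hr.exists_walk_length_eq_dist
  have := pathGraph_walk_length w
  rw [hw] at this
  exact_mod_cast this

end Path

section Box

variable {α β : Type*} {G : SimpleGraph α} {H : SimpleGraph β}

lemma boxProd_dist_le (hG : G.Connected) (hH : H.Connected) (x y : α × β) :
    (G □ H).dist x y ≤ G.dist x.1 y.1 + H.dist x.2 y.2 := by
  obtain ⟨w1, hw1⟩ := (hG.preconnected x.1 y.1).exists_walk_length_eq_dist
  obtain ⟨w2, hw2⟩ := (hH.preconnected x.2 y.2).exists_walk_length_eq_dist
  have hw : (G □ H).dist (x.1, x.2) (y.1, y.2) ≤ ((w1.boxProdLeft H x.2).append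
      (w2.boxProdRight G y.1)).length := dist_le _
  rw [Walk.length_append] at hw
  have l1 : (w1.boxProdLeft H x.2).length = w1.length := Walk.length_map _ _
  have l2 : (w2.boxProdRight G y.1).length = w2.length := Walk.length_map _ _
  calc (G □ H).dist x y = (G □ H).dist (x.1, x.2) (y.1, y.2) := by simp
    _ ≤ w1.length + w2.length := by omega
    _ = _ := by rw [hw1, hw2]

lemma boxProd_walk_length_ge (hG : G.Connected) (hH : H.Connected) :
    ∀ {x y : α × β} (w : (G □ H).Walk x y),
      G.dist x.1 y.1 + H.dist x.2 y.2 ≤ w.length := by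
  intro x y w
  induction w with
  | nil => simp
  | @cons u v z h p ih =>
    rcases boxProd_adj.mp h with ⟨hadj, heq⟩ | ⟨hadj, heq⟩
    · have t1 : G.dist u.1 z.1 ≤ G.dist u.1 v.1 + G.dist v.1 z.1 := hG.dist_triangle
      have t2 : G.dist u.1 v.1 ≤ 1 :=
        le_trans (dist_le (Walk.cons hadj Walk.nil)) (by simp)
      have t3 : H.dist u.2 z.2 = H.dist v.2 z.2 := by rw [heq]
      simp only [Walk.length_cons]
      omega
    · have t1 : H.dist u.2 z.2 ≤ H.dist u.2 v.2 + H.dist v.2 z.2 := hH.dist_triangle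
      have t2 : H.dist u.2 v.2 ≤ 1 :=
        le_trans (dist_le (Walk.cons hadj Walk.nil)) (by simp)
      have t3 : G.dist u.1 z.1 = G.dist v.1 z.1 := by rw [heq]
      simp only [Walk.length_cons]
      omega

lemma boxProd_dist_ge (hG : G.Connected) (hH : H.Connected) (x y : α × β) :
    G.dist x.1 y.1 + H.dist x.2 y.2 ≤ (G □ H).dist x y := by
  obtain ⟨w, hw⟩ := (((hG.boxProd hH)).preconnected x y).exists_walk_length_eq_dist
  have := boxProd_walk_length_ge hG hH w
  omega

end Box


section Main

variable {m n : ℕ}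

lemma pathGraph_connected' (hn : 0 < n) : (pathGraph n).Connected := by
  obtain ⟨n', rfl⟩ : ∃ n', n = n' + 1 := ⟨n - 1, by omega⟩
  exact pathGraph_connected n'

lemma stackedBook_connected (hm : 0 < m) (hn : 0 < n) : (stackedBook m n).Connected :=
  (starGraph_connected hm).boxProd (pathGraph_connected' hn)

lemma stackedBook_dist_le (hm : 0 < m) (hn : 0 < n) (u v : Fin m × Fin n) :
    (stackedBook m n).dist u v ≤
      (_root_.starGraph m).dist u.1 v.1 + (pathGraph n).dist u.2 v.2 :=
  boxProd_dist_le (starGraph_connected hm) (pathGraph_connected' hn) u v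

lemma stackedBook_diam_ge (hm : 3 ≤ m) (hn : 2 ≤ n) :
    n + 1 ≤ (stackedBook m n).diam := by
  have hm0 : 0 < m := by omega
  have hn0 : 0 < n := by omega
  have hconn := stackedBook_connected hm0 hn0
  have : Nonempty (Fin m × Fin n) := ⟨(⟨0, hm0⟩, ⟨0, hn0⟩)⟩
  set u : Fin m × Fin n := (⟨1, by omega⟩, ⟨0, hn0⟩) with hu
  set v : Fin m × Fin n := (⟨2, by omega⟩, ⟨n - 1, by omega⟩) with hv
  have hstar : 2 ≤ (_root_.starGraph m).dist u.1 v.1 := by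
    apply starGraph_two_le_dist hm0
    · intro h; rw [Fin.mk.injEq] at h; omega
    · simp
    · simp
  have hpath : n - 1 ≤ (pathGraph n).dist u.2 v.2 := by
    have hr : (pathGraph n).Reachable u.2 v.2 := (pathGraph_connected' hn0).preconnected _ _
    have := pathGraph_dist_ge u.2 v.2 hr
    simp only [hu, hv] at this ⊢
    omega
  have hdist : n + 1 ≤ (stackedBook m n).dist u v := by
    have := boxProd_dist_ge (starGraph_connected hm0) (pathGraph_connected' hn0) u v
    have h2 : (stackedBook m n).dist u v =
        (_root_.starGraph m □ pathGraph n).dist u v := rfl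
    omega
  have hne : (stackedBook m n).ediam ≠ ⊤ := by
    obtain ⟨a, b, hab⟩ := exists_edist_eq_ediam_of_finite (G := stackedBook m n)
    rw [← hab]
    exact edist_ne_top_iff_reachable.mpr (hconn.preconnected a b)
  exact le_trans hdist (dist_le_diam hne)

end Main

set_option maxHeartbeats 2000000 in
/-- any radio labeling of `G_{m,n}` restricted to the `3m` vertices of the
subgraph `G(*)` (the stars at 1-based indices `1`, `(n+1)/2` and `n`) has span at least
`(2mn + 4m - n + 5)/2`. -/
theorem stmt15 (m n : ℕ) (hm : 3 ≤ m) (hn : 5 ≤ n) (ho : Odd n)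
    (f : Fin m × Fin n → ℕ) (hf : IsRadioLabeling (stackedBook m n) f) :
    (2 * m * n + 4 * m - n + 5) / 2 ≤
      sSup (f '' {p : Fin m × Fin n |
          (p.2 : ℕ) = 0 ∨ (p.2 : ℕ) = (n - 1) / 2 ∨ (p.2 : ℕ) = n - 1}) -
      sInf (f '' {p : Fin m × Fin n |
          (p.2 : ℕ) = 0 ∨ (p.2 : ℕ) = (n - 1) / 2 ∨ (p.2 : ℕ) = n - 1}) := by
  obtain ⟨k0, hk0⟩ := ho
  have hm0 : 0 < m := by omega
  have hn0 : 0 < n := by omega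
  set k : ℕ := (n - 1) / 2 with hk
  have hn2k : n = 2 * k + 1 := by omega
  have hk2 : 2 ≤ k := by omega
  set z : Fin m := ⟨0, hm0⟩ with hz
  set i0 : Fin n := ⟨0, hn0⟩ with hi0
  set iM : Fin n := ⟨k, by omega⟩ with hiM
  set iL : Fin n := ⟨2 * k, by omega⟩ with hiL
  have hd0M : i0 ≠ iM := by simp only [hi0, hiM, ne_eq, Fin.mk.injEq]; omega
  have hd0L : i0 ≠ iL := by simp only [hi0, hiL, ne_eq, Fin.mk.injEq]; omega
  have hdML : iM ≠ iL := by simp only [hiM, hiL, ne_eq, Fin.mk.injEq]; omega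
  set tri : Finset (Fin n) := {i0, iM, iL} with htri
  have htric : tri.card = 3 := by
    rw [htri, Finset.card_insert_of_notMem (by simp [hd0M, hd0L]),
      Finset.card_insert_of_notMem (by simp [hdML]), Finset.card_singleton]
  set S : Finset (Fin m × Fin n) := Finset.univ ×ˢ tri with hS
  have hScard : S.card = 3 * m := by
    rw [hS, Finset.card_product, htric, Finset.card_univ, Fintype.card_fin]; ring
  have hmemS : ∀ p : Fin m × Fin n, p ∈ S ↔ p.2 ∈ tri := by
    intro p; rw [hS, Finset.mem_product]; simp
  have htv : ∀ p : Fin n, p ∈ tri → (p : ℕ) = 0 ∨ (p : ℕ) = k ∨ (p : ℕ) = 2 * k := by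
    intro p hp
    rw [htri] at hp
    simp only [Finset.mem_insert, Finset.mem_singleton] at hp
    rcases hp with h | h | h <;> subst h <;> simp [hi0, hiM, hiL]
  -- the key radio-constraint lemma
  have hdiam : (2 * k + 2 : ℕ) ≤ (stackedBook m n).diam := by
    have := stackedBook_diam_ge hm (by omega : 2 ≤ n); omega
  have key : ∀ u v : Fin m × Fin n, u ≠ v →
      (2 * k + 3 : ℤ) - ((_root_.starGraph m).dist u.1 v.1 : ℤ) -
        ((pathGraph n).dist u.2 v.2 : ℤ) ≤ |(f u : ℤ) - (f v : ℤ)| := by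
    intro u v huv
    have h1 := hf u v huv
    have h2 := stackedBook_dist_le hm0 hn0 u v
    have h4 : ((stackedBook m n).dist u v : ℤ) ≤
        ((_root_.starGraph m).dist u.1 v.1 : ℤ) + ((pathGraph n).dist u.2 v.2 : ℤ) := by
      exact_mod_cast h2
    have h5 : (2 * k + 2 : ℤ) ≤ ((stackedBook m n).diam : ℤ) := by exact_mod_cast hdiam
    linarith
  have hstard : ∀ a b : Fin m, ((_root_.starGraph m).dist a b : ℤ) ≤
      2 - (if a = z then (1 : ℤ) else 0) - (if b = z then (1 : ℤ) else 0) := by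
    intro a b
    have hzv : ∀ c : Fin m, c = z ↔ (c : ℕ) = 0 := by
      intro c; simp [hz, Fin.ext_iff]
    by_cases ha : a = z <;> by_cases hb : b = z
    · simp [ha, hb, SimpleGraph.dist_self]
    · have h1 := starGraph_dist_le_one (a := a) (b := b) (Or.inl ((hzv a).mp ha))
      rw [if_pos ha, if_neg hb]; push_cast; omega
    · have h1 := starGraph_dist_le_one (a := a) (b := b) (Or.inr ((hzv b).mp hb))
      rw [if_neg ha, if_pos hb]; push_cast; omega
    · have h1 := starGraph_dist_le_two hm0 a b
      rw [if_neg ha, if_neg hb]; push_cast; omega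
  have hpconn := pathGraph_connected' hn0
  -- injectivity of f on S
  have hSdist : ∀ u v : Fin m × Fin n, u ∈ S → v ∈ S → u ≠ v →
      (1 : ℤ) ≤ |(f u : ℤ) - (f v : ℤ)| := by
    intro u v hu hv huv
    have h1 := key u v huv
    have h2 := hstard u.1 v.1
    have h3 : ((pathGraph n).dist u.2 v.2 : ℤ) ≤ 2 * k := by
      have hu2 := htv u.2 ((hmemS u).mp hu)
      have hv2 := htv v.2 ((hmemS v).mp hv)
      have : (pathGraph n).dist u.2 v.2 ≤ 2 * k := by
        apply pathGraph_dist_le hpconn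
        omega
      exact_mod_cast this
    have h4 : (0 : ℤ) ≤ (if u.1 = z then (1 : ℤ) else 0) := by split <;> norm_num
    have h5 : (0 : ℤ) ≤ (if v.1 = z then (1 : ℤ) else 0) := by split <;> norm_num
    linarith
  have hSinj : Set.InjOn f ↑S := by
    intro u hu v hv heq
    by_contra hne
    have h1 := hSdist u v (Finset.mem_coe.mp hu) (Finset.mem_coe.mp hv) hne
    rw [heq] at h1
    simp at h1
  set N := 3 * m with hN
  have hN9 : 9 ≤ N := by omega
  set T : Finset ℕ := S.image f with hT
  have hTcard : T.card = N := by rw [hT, Finset.card_image_of_injOn hSinj, hScard]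
  set o := T.orderIsoOfFin hTcard with ho'
  have hexists : ∀ i : Fin N, ∃ p, p ∈ S ∧ f p = (o i : ℕ) := by
    intro i
    have h1 : (o i : ℕ) ∈ Finset.image f S := (o i).2
    obtain ⟨a, ha, hfa⟩ := Finset.mem_image.mp h1
    exact ⟨a, ha, hfa⟩
  choose σ hσS hσf using hexists
  have hymono : ∀ i j : Fin N, i < j → (f (σ i) : ℤ) < (f (σ j) : ℤ) := by
    intro i j hij
    have h1 : o i < o j := o.strictMono hij
    have h2 : (o i : ℕ) < (o j : ℕ) := Subtype.coe_lt_coe.mpr h1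
    rw [hσf i, hσf j]
    exact_mod_cast h2
  have hσinj : ∀ i j : Fin N, σ i = σ j → i = j := by
    intro i j h
    by_contra hne
    rcases Ne.lt_or_gt hne with hlt | hlt
    · exact absurd (by rw [h]) (hymono i j hlt).ne
    · exact absurd (by rw [h]) (hymono j i hlt).ne'
  have hσsurj : ∀ p, p ∈ S → ∃ i, σ i = p := by
    intro p hp
    have hfp : f p ∈ T := Finset.mem_image_of_mem f hp
    refine ⟨o.symm ⟨f p, hfp⟩,
      hSinj (Finset.mem_coe.mpr (hσS _)) (Finset.mem_coe.mpr hp) ?_⟩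
    rw [hσf]
    simp
  set q : ℕ → Fin m × Fin n := fun i => if h : i < N then σ ⟨i, h⟩ else (z, i0) with hq
  set Y : ℕ → ℤ := fun i => if h : i < N then ((f (σ ⟨i, h⟩) : ℕ) : ℤ) else 0 with hYd
  have hqS : ∀ i, i < N → q i ∈ S := by
    intro i h; simp only [hq, dif_pos h]; exact hσS _
  have hYdef : ∀ (i : ℕ) (h : i < N), Y i = (f (σ ⟨i, h⟩) : ℤ) := by
    intro i h; simp only [hYd, dif_pos h]
  have hYq : ∀ (i : ℕ) (h : i < N), Y i = (f (q i) : ℤ) := by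
    intro i h; rw [hYdef i h]; simp only [hq, dif_pos h]
  have hYlt : ∀ i j, j < N → i < j → Y i < Y j := by
    intro i j hj hij
    have hi : i < N := by omega
    rw [hYdef i hi, hYdef j hj]
    exact hymono _ _ (by simpa using hij)
  have hqinj : ∀ i j, i < N → j < N → i ≠ j → q i ≠ q j := by
    intro i j hi hj hij heq
    have h2 : (⟨i, hi⟩ : Fin N) = ⟨j, hj⟩ := by
      apply hσinj
      have e1 : σ ⟨i, hi⟩ = q i := by simp only [hq, dif_pos hi]
      have e2 : σ ⟨j, hj⟩ = q j := by simp only [hq, dif_pos hj]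
      rw [e1, e2, heq]
    simp only [Fin.mk.injEq] at h2
    exact hij h2
  -- indicators
  set Cc : ℕ → ℤ := fun i => if (q i).1 = z then 1 else 0 with hCc
  set Bb : ℕ → ℤ := fun i => if (q i).2 = iM then 1 else 0 with hBb
  set Ee : ℕ → ℤ := fun i =>
    if ((q i).2 = (q (i+1)).2 ∧ (q i).2 ≠ iM) then 2*(k:ℤ) else 0 with hEe
  set W : ℕ → ℤ := fun i => 1 + Cc i + Cc (i+1) + k * (Bb i + Bb (i+1)) + Ee i with hWd
  have hC01 : ∀ i, 0 ≤ Cc i ∧ Cc i ≤ 1 := by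
    intro i; simp only [hCc]; split <;> norm_num
  have hB01 : ∀ i, 0 ≤ Bb i ∧ Bb i ≤ 1 := by
    intro i; simp only [hBb]; split <;> norm_num
  have hE0 : ∀ i, 0 ≤ Ee i := by
    intro i; simp only [hEe]; split <;> positivity
  -- counting sums
  have hsum : ∀ g : Fin m × Fin n → ℤ,
      (∑ i ∈ Finset.range N, g (q i)) = ∑ p ∈ S, g p := by
    intro g
    rw [← Fin.sum_univ_eq_sum_range (fun i => g (q i)) N]
    have e1 : ∀ i : Fin N, g (q i.val) = g (σ i) := by
      intro i; simp only [hq, dif_pos i.isLt, Fin.eta]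
    rw [Finset.sum_congr rfl (fun i _ => e1 i)]
    exact Finset.sum_bij (fun i _ => σ i) (fun i _ => hσS i)
      (fun i _ j _ h => hσinj i j h)
      (fun p hp => by obtain ⟨i, hi⟩ := hσsurj p hp; exact ⟨i, Finset.mem_univ i, hi⟩)
      (fun i _ => rfl)
  have hCsum : ∑ i ∈ Finset.range N, Cc i = 3 := by
    have h2 : (∑ i ∈ Finset.range N, Cc i)
        = ∑ p ∈ S, (if p.1 = z then (1:ℤ) else 0) :=
      hsum (fun p => if p.1 = z then (1:ℤ) else 0)
    rw [h2, hS, Finset.sum_product]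
    have h3 : ∀ a : Fin m, (∑ b ∈ tri, (if a = z then (1:ℤ) else 0))
        = (if a = z then (3:ℤ) else 0) := by
      intro a; rw [Finset.sum_const, htric]; split <;> simp
    rw [Finset.sum_congr rfl (fun a _ => h3 a), Finset.sum_ite_eq' Finset.univ z
      (fun _ => (3:ℤ))]
    simp
  have hBsum : ∑ i ∈ Finset.range N, Bb i = m := by
    have h2 : (∑ i ∈ Finset.range N, Bb i)
        = ∑ p ∈ S, (if p.2 = iM then (1:ℤ) else 0) :=
      hsum (fun p => if p.2 = iM then (1:ℤ) else 0)
    rw [h2, hS, Finset.sum_product]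
    have h3 : ∀ a : Fin m, (∑ b ∈ tri, (if b = iM then (1:ℤ) else 0)) = 1 := by
      intro a
      rw [Finset.sum_ite_eq' tri iM (fun _ => (1:ℤ))]
      rw [if_pos (by rw [htri]; simp)]
    rw [Finset.sum_congr rfl (fun a _ => h3 a)]
    simp [mul_comm]
  have hv0 : (i0 : ℕ) = 0 := rfl
  have hvM : (iM : ℕ) = k := rfl
  have hvL : (iL : ℕ) = 2 * k := rfl
  -- per-step gap bound
  have hgap : ∀ i : ℕ, i + 1 < N → W i ≤ Y (i + 1) - Y i := by
    intro i hi1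
    have hiN : i < N := by omega
    have hu : q i ∈ S := hqS i hiN
    have hv : q (i + 1) ∈ S := hqS (i + 1) hi1
    have hne : q i ≠ q (i + 1) := hqinj i (i + 1) hiN hi1 (by omega)
    have habs : |(f (q i) : ℤ) - (f (q (i + 1)) : ℤ)| = Y (i + 1) - Y i := by
      rw [← hYq i hiN, ← hYq (i + 1) hi1, abs_sub_comm,
        abs_of_pos (by linarith [hYlt i (i + 1) hi1 (by omega)])]
    have hkey := key (q i) (q (i + 1)) hne
    rw [habs] at hkey
    have hs := hstard (q i).1 (q (i + 1)).1
    have hu2 := (hmemS _).mp hu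
    have hv2 := (hmemS _).mp hv
    rw [htri] at hu2 hv2
    simp only [Finset.mem_insert, Finset.mem_singleton] at hu2 hv2
    simp only [hWd, hCc, hBb, hEe]
    rcases hu2 with h2u | h2u | h2u <;> rcases hv2 with h2v | h2v | h2v <;>
        rw [h2u, h2v] at hkey ⊢
    · rw [if_neg hd0M, if_pos (show i0 = i0 ∧ i0 ≠ iM from ⟨rfl, hd0M⟩)]
      have hP : ((pathGraph n).dist i0 i0 : ℤ) = 0 := by
        rw [SimpleGraph.dist_self]; norm_num
      linarith
    · rw [if_neg hd0M, if_pos (show iM = iM from rfl),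
        if_neg (show ¬(i0 = iM ∧ i0 ≠ iM) from fun h => hd0M h.1)]
      have hP : (pathGraph n).dist i0 iM ≤ k :=
        pathGraph_dist_le hpconn _ _ k (by rw [hv0, hvM]; omega)
      have hPz : ((pathGraph n).dist i0 iM : ℤ) ≤ k := by exact_mod_cast hP
      linarith
    · rw [if_neg hd0M, if_neg (show ¬(iL = iM) from Ne.symm hdML),
        if_neg (show ¬(i0 = iL ∧ i0 ≠ iM) from fun h => hd0L h.1)]
      have hP : (pathGraph n).dist i0 iL ≤ 2 * k :=
        pathGraph_dist_le hpconn _ _ (2 * k) (by rw [hv0, hvL]; omega)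
      have hPz : ((pathGraph n).dist i0 iL : ℤ) ≤ 2 * k := by exact_mod_cast hP
      linarith
    · rw [if_pos (show iM = iM from rfl), if_neg hd0M,
        if_neg (show ¬(iM = i0 ∧ iM ≠ iM) from fun h => h.2 rfl)]
      have hP : (pathGraph n).dist iM i0 ≤ k :=
        pathGraph_dist_le hpconn _ _ k (by rw [hv0, hvM]; omega)
      have hPz : ((pathGraph n).dist iM i0 : ℤ) ≤ k := by exact_mod_cast hP
      linarith
    · rw [if_pos (show iM = iM from rfl),
        if_neg (show ¬(iM = iM ∧ iM ≠ iM) from fun h => h.2 rfl)]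
      have hP : ((pathGraph n).dist iM iM : ℤ) = 0 := by
        rw [SimpleGraph.dist_self]; norm_num
      linarith
    · rw [if_pos (show iM = iM from rfl), if_neg (show ¬(iL = iM) from Ne.symm hdML),
        if_neg (show ¬(iM = iL ∧ iM ≠ iM) from fun h => h.2 rfl)]
      have hP : (pathGraph n).dist iM iL ≤ k :=
        pathGraph_dist_le hpconn _ _ k (by rw [hvM, hvL]; omega)
      have hPz : ((pathGraph n).dist iM iL : ℤ) ≤ k := by exact_mod_cast hP
      linarith
    · rw [if_neg (show ¬(iL = iM) from Ne.symm hdML), if_neg hd0M,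
        if_neg (show ¬(iL = i0 ∧ iL ≠ iM) from fun h => (Ne.symm hd0L) h.1)]
      have hP : (pathGraph n).dist iL i0 ≤ 2 * k :=
        pathGraph_dist_le hpconn _ _ (2 * k) (by rw [hv0, hvL]; omega)
      have hPz : ((pathGraph n).dist iL i0 : ℤ) ≤ 2 * k := by exact_mod_cast hP
      linarith
    · rw [if_neg (show ¬(iL = iM) from Ne.symm hdML), if_pos (show iM = iM from rfl),
        if_neg (show ¬(iL = iM ∧ iL ≠ iM) from fun h => (Ne.symm hdML) h.1)]
      have hP : (pathGraph n).dist iL iM ≤ k :=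
        pathGraph_dist_le hpconn _ _ k (by rw [hvM, hvL]; omega)
      have hPz : ((pathGraph n).dist iL iM : ℤ) ≤ k := by exact_mod_cast hP
      linarith
    · rw [if_neg (show ¬(iL = iM) from Ne.symm hdML),
        if_pos (show iL = iL ∧ iL ≠ iM from ⟨rfl, Ne.symm hdML⟩)]
      have hP : ((pathGraph n).dist iL iL : ℤ) = 0 := by
        rw [SimpleGraph.dist_self]; norm_num
      linarith
  -- jump bound
  have hjump : ∀ j : ℕ, j + 2 < N → (q j).2 = (q (j + 2)).2 →
      (2 * (k : ℤ) + 1) ≤ Y (j + 2) - Y j := by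
    intro j hj2 hequal
    have hjN : j < N := by omega
    have hne := hqinj j (j + 2) hjN hj2 (by omega)
    have habs : |(f (q j) : ℤ) - (f (q (j + 2)) : ℤ)| = Y (j + 2) - Y j := by
      rw [← hYq j hjN, ← hYq (j + 2) hj2, abs_sub_comm,
        abs_of_pos (by linarith [hYlt j (j + 2) hj2 (by omega)])]
    have hkey := key (q j) (q (j + 2)) hne
    rw [habs] at hkey
    have hs := hstard (q j).1 (q (j + 2)).1
    have hP : ((pathGraph n).dist (q j).2 (q (j + 2)).2 : ℤ) = 0 := by
      rw [hequal, SimpleGraph.dist_self]; norm_num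
    have h4 : (0 : ℤ) ≤ (if (q j).1 = z then (1 : ℤ) else 0) := by split <;> norm_num
    have h5 : (0 : ℤ) ≤ (if (q (j + 2)).1 = z then (1 : ℤ) else 0) := by
      split <;> norm_num
    linarith
  -- sums over the range
  have hC1 : ∑ i ∈ Finset.range (N - 1), Cc i = 3 - Cc (N - 1) := by
    have h1 := hCsum
    rw [show N = (N - 1) + 1 by omega, Finset.sum_range_succ] at h1
    linarith
  have hC2 : ∑ i ∈ Finset.range (N - 1), Cc (i + 1) = 3 - Cc 0 := by
    have h1 := hCsum
    rw [show N = (N - 1) + 1 by omega, Finset.sum_range_succ'] at h1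
    linarith
  have hB1 : ∑ i ∈ Finset.range (N - 1), Bb i = (m : ℤ) - Bb (N - 1) := by
    have h1 := hBsum
    rw [show N = (N - 1) + 1 by omega, Finset.sum_range_succ] at h1
    linarith
  have hB2 : ∑ i ∈ Finset.range (N - 1), Bb (i + 1) = (m : ℤ) - Bb 0 := by
    have h1 := hBsum
    rw [show N = (N - 1) + 1 by omega, Finset.sum_range_succ'] at h1
    linarith
  have hWsum : ∑ i ∈ Finset.range (N - 1), W i
      = ((N - 1 : ℕ) : ℤ) + (3 - Cc (N - 1)) + (3 - Cc 0)
        + (2 * (m : ℤ) * (k : ℤ) - (k : ℤ) * (Bb (N - 1) + Bb 0))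
        + ∑ i ∈ Finset.range (N - 1), Ee i := by
    simp only [hWd, mul_add, Finset.sum_add_distrib, ← Finset.mul_sum]
    rw [hC1, hC2, hB1, hB2, Finset.sum_const, Finset.card_range]
    push_cast
    ring
  have hspan0 : ∑ i ∈ Finset.range (N - 1), (Y (i + 1) - Y i) = Y (N - 1) - Y 0 :=
    Finset.sum_range_sub Y (N - 1)
  have hWlespan : ∑ i ∈ Finset.range (N - 1), W i ≤ Y (N - 1) - Y 0 := by
    rw [← hspan0]
    refine Finset.sum_le_sum fun i hi => hgap i ?_
    have := Finset.mem_range.mp hi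
    omega
  have hNc : ((N - 1 : ℕ) : ℤ) = 3 * (m : ℤ) - 1 := by omega
  have hkz : (2 : ℤ) ≤ (k : ℤ) := by exact_mod_cast hk2
  have hmz : (3 : ℤ) ≤ (m : ℤ) := by exact_mod_cast hm
  have hEsum_nonneg : 0 ≤ ∑ i ∈ Finset.range (N - 1), Ee i :=
    Finset.sum_nonneg fun i _ => hE0 i
  have hBval : ∀ i : ℕ, Bb i = 0 ∨ Bb i = 1 := by
    intro i; simp only [hBb]; split
    · right; rfl
    · left; rfl
  have hBmem : ∀ i : ℕ, Bb i = 1 → (q i).2 = iM := by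
    intro i hB
    simp only [hBb] at hB
    by_contra hne
    rw [if_neg hne] at hB
    norm_num at hB
  have hBnot : ∀ i : ℕ, Bb i = 0 → (q i).2 ≠ iM := by
    intro i hB heq
    simp only [hBb] at hB
    rw [if_pos heq] at hB
    norm_num at hB
  have hCmem : ∀ i : ℕ, Cc i = 1 → (q i).1 = z := by
    intro i hC
    simp only [hCc] at hC
    by_contra hne
    rw [if_neg hne] at hC
    norm_num at hC
  -- main lower bound on the span
  have hmain : (2 * (m : ℤ) * (k : ℤ) + 3 * (m : ℤ) - (k : ℤ) + 2) ≤ Y (N - 1) - Y 0 := by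
    by_cases hb0 : Bb 0 = 1 ∧ Bb (N - 1) = 1
    · -- both ends in the middle star
      have hBB : Bb (N - 1) + Bb 0 = 2 := by rw [hb0.1, hb0.2]; norm_num
      have hkBB : (k : ℤ) * (Bb (N - 1) + Bb 0) = 2 * (k : ℤ) := by rw [hBB]; ring
      have hC0N : Cc 0 + Cc (N - 1) ≤ 1 := by
        by_contra hcon
        push_neg at hcon
        have h1 := hC01 0
        have h2 := hC01 (N - 1)
        have e1 : Cc 0 = 1 := by linarith
        have e2 : Cc (N - 1) = 1 := by linarith
        have heq : q 0 = q (N - 1) := by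
          have u1 := hCmem 0 e1
          have u2 := hCmem (N - 1) e2
          have v1 := hBmem 0 hb0.1
          have v2 := hBmem (N - 1) hb0.2
          exact Prod.ext (u1.trans u2.symm) (v1.trans v2.symm)
        exact hqinj 0 (N - 1) (by omega) (by omega) (by omega) heq
      by_cases hssE : ∃ i ∈ Finset.range (N - 1), Ee i ≠ 0
      · -- case 2a : some same-star adjacent non-middle pair
        obtain ⟨i₁, hi₁mem, hi₁⟩ := hssE
        have hEbig : (2 * (k : ℤ)) ≤ Ee i₁ := by
          simp only [hEe] at hi₁ ⊢
          split at hi₁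
          · rw [if_pos (by assumption)]
          · simp at hi₁
        have hEsum : (2 * (k : ℤ)) ≤ ∑ i ∈ Finset.range (N - 1), Ee i :=
          le_trans hEbig (Finset.single_le_sum (fun i _ => hE0 i) hi₁mem)
        have h1 := hC01 0
        have h2 := hC01 (N - 1)
        linarith [hWlespan, hWsum]
      · -- case 2b : no same-star adjacent pair anywhere
        push_neg at hssE
        have hEall : ∀ i ∈ Finset.range (N - 1), Ee i = 0 := hssE
        have hEsum0 : ∑ i ∈ Finset.range (N - 1), Ee i = 0 :=
          Finset.sum_eq_zero hEall
        -- pigeonhole: three consecutive non-middle labels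
        have hpig : ∃ j : ℕ, j + 2 < N ∧ Bb j = 0 ∧ Bb (j + 1) = 0 ∧ Bb (j + 2) = 0 := by
          by_contra hno
          push_neg at hno
          have hge : ∀ j ∈ Finset.range (N - 2), (1 : ℤ) ≤ Bb j + Bb (j + 1) + Bb (j + 2) := by
            intro j hj
            have hj2 : j + 2 < N := by have := Finset.mem_range.mp hj; omega
            rcases hBval j with c1 | c1
            · rcases hBval (j + 1) with c2 | c2
              · rcases hBval (j + 2) with c3 | c3
                · exact absurd c3 (hno j hj2 c1 c2)
                · rw [c1, c2, c3]; norm_num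
              · have := (hB01 (j + 2)).1; rw [c1, c2]; linarith
            · have := (hB01 (j + 1)).1; have := (hB01 (j + 2)).1; rw [c1]; linarith
          have hsum1 : ((N - 2 : ℕ) : ℤ) ≤
              ∑ j ∈ Finset.range (N - 2), (Bb j + Bb (j + 1) + Bb (j + 2)) := by
            have := Finset.card_nsmul_le_sum (Finset.range (N - 2))
              (fun j => Bb j + Bb (j + 1) + Bb (j + 2)) 1 hge
            rw [Finset.card_range] at this
            simpa using this
          have e1 : ∑ j ∈ Finset.range (N - 2), Bb j = (m : ℤ) - Bb (N - 1) - Bb (N - 2) := by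
            have h1 := hBsum
            rw [show N = (N - 2) + 1 + 1 by omega, Finset.sum_range_succ,
              Finset.sum_range_succ] at h1
            have e : (N - 2) + 1 = N - 1 := by omega
            rw [e] at h1
            linarith
          have e2 : ∑ j ∈ Finset.range (N - 2), Bb (j + 1) = (m : ℤ) - Bb 0 - Bb (N - 1) := by
            have h1 := hB2
            rw [show N - 1 = (N - 2) + 1 by omega, Finset.sum_range_succ] at h1
            have e : (N - 2) + 1 = N - 1 := by omega
            rw [e] at h1
            linarith
          have e3 : ∑ j ∈ Finset.range (N - 2), Bb (j + 2) = (m : ℤ) - Bb 0 - Bb 1 := by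
            have h1 := hB2
            rw [show N - 1 = (N - 2) + 1 by omega, Finset.sum_range_succ'] at h1
            have e : ∀ i : ℕ, Bb (i + 1 + 1) = Bb (i + 2) := fun i => by
              congr 1
            rw [Finset.sum_congr rfl (fun i _ => e i)] at h1
            linarith
          have hsum2 : ∑ j ∈ Finset.range (N - 2), (Bb j + Bb (j + 1) + Bb (j + 2))
              = ((m : ℤ) - Bb (N - 1) - Bb (N - 2)) + ((m : ℤ) - Bb 0 - Bb (N - 1))
                + ((m : ℤ) - Bb 0 - Bb 1) := by
            rw [Finset.sum_add_distrib, Finset.sum_add_distrib, e1, e2, e3]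
          have hNc2 : ((N - 2 : ℕ) : ℤ) = 3 * (m : ℤ) - 2 := by omega
          have := (hB01 1).1
          have := (hB01 (N - 2)).1
          rw [hsum2, hNc2] at hsum1
          linarith [hb0.1, hb0.2]
        obtain ⟨j, hj2, hbj, hbj1, hbj2⟩ := hpig
        -- the three consecutive labels alternate between the two end stars
        have hne01 : (q j).2 ≠ (q (j + 1)).2 := by
          intro he
          have hE := hEall j (Finset.mem_range.mpr (by omega))
          simp only [hEe] at hE
          rw [if_pos ⟨he, hBnot j hbj⟩] at hE
          omega
        have hne12 : (q (j + 1)).2 ≠ (q (j + 2)).2 := by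
          intro he
          have hE := hEall (j + 1) (Finset.mem_range.mpr (by omega))
          simp only [hEe] at hE
          rw [if_pos ⟨he, hBnot (j + 1) hbj1⟩] at hE
          omega
        have htwo : ∀ i : ℕ, i < N → Bb i = 0 → (q i).2 = i0 ∨ (q i).2 = iL := by
          intro i hiN hB
          have := (hmemS _).mp (hqS i hiN)
          rw [htri] at this
          simp only [Finset.mem_insert, Finset.mem_singleton] at this
          rcases this with h | h | h
          · exact Or.inl h
          · exact absurd h (hBnot i hB)
          · exact Or.inr h
        have hqj : (q j).2 = (q (j + 2)).2 := by
          rcases htwo j (by omega) hbj with ha | ha <;>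
            rcases htwo (j + 1) (by omega) hbj1 with hb | hb <;>
              rcases htwo (j + 2) (by omega) hbj2 with hc | hc <;>
                first
                  | (exact absurd (ha.trans hb.symm) hne01)
                  | (exact absurd (hb.trans hc.symm) hne12)
                  | (exact ha.trans hc.symm)
        have hjmp := hjump j hj2 hqj
        have hs1 : ∑ i ∈ Finset.range j, W i ≤ Y j - Y 0 := by
          rw [← Finset.sum_range_sub Y j]
          refine Finset.sum_le_sum fun i hi => hgap i ?_
          have := Finset.mem_range.mp hi
          omega
        have hs2 : ∑ i ∈ Finset.range (N - 3 - j), W (j + 2 + i) ≤ Y (N - 1) - Y (j + 2) := by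
          have h1 : ∑ i ∈ Finset.range (N - 3 - j), (Y (j + 2 + i + 1) - Y (j + 2 + i))
              = Y (j + 2 + (N - 3 - j)) - Y (j + 2 + 0) :=
            Finset.sum_range_sub (fun t => Y (j + 2 + t)) (N - 3 - j)
          rw [show j + 2 + (N - 3 - j) = N - 1 by omega] at h1
          rw [show j + 2 + 0 = j + 2 by omega] at h1
          rw [← h1]
          refine Finset.sum_le_sum fun i hi => hgap (j + 2 + i) ?_
          have := Finset.mem_range.mp hi
          omega
        have hsplitj : (∑ i ∈ Finset.range (N - 1), W i)
            = (∑ i ∈ Finset.range j, W i) + W j + W (j + 1)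
              + ∑ i ∈ Finset.range (N - 3 - j), W (j + 2 + i) := by
          rw [show N - 1 = j + ((N - 3 - j) + 1 + 1) by omega, Finset.sum_range_add]
          rw [Finset.sum_range_succ', Finset.sum_range_succ']
          have e : ∀ i : ℕ, W (j + (i + 1 + 1)) = W (j + 2 + i) := fun i => by
            congr 1; omega
          rw [Finset.sum_congr rfl (fun i _ => e i)]
          have e2 : j + (0 + 1) = j + 1 := by omega
          have e3 : j + 0 = j := by omega
          rw [e2, e3]
          ring
        have hWj : W j + W (j + 1) ≤ 2 + Cc j + 2 * Cc (j + 1) + Cc (j + 2) := by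
          have hEj : Ee j = 0 := hEall j (Finset.mem_range.mpr (by omega))
          have hEj1 : Ee (j + 1) = 0 := hEall (j + 1) (Finset.mem_range.mpr (by omega))
          simp only [hWd]
          rw [hEj, hEj1, hbj, hbj1, hbj2]
          ring_nf
          linarith
        have hCj02 : Cc j + Cc (j + 2) ≤ 1 := by
          by_contra hcon
          push_neg at hcon
          have h1 := hC01 j
          have h2 := hC01 (j + 2)
          have e1 : Cc j = 1 := by linarith
          have e2 : Cc (j + 2) = 1 := by linarith
          have heq : q j = q (j + 2) :=
            Prod.ext ((hCmem j e1).trans (hCmem (j + 2) e2).symm) hqj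
          exact hqinj j (j + 2) (by omega) (by omega) (by omega) heq
        have hCj1 := hC01 (j + 1)
        have hspan3 : Y (N - 1) - Y 0
            = (Y j - Y 0) + (Y (j + 2) - Y j) + (Y (N - 1) - Y (j + 2)) := by ring
        rw [hEsum0] at hWsum
        linarith [hWsum, hs1, hs2, hjmp, hsplitj, hWj, hCj02, hkBB]
    · -- case 1 : at most one end is in the middle star
      have hBle : Bb 0 + Bb (N - 1) ≤ 1 := by
        rcases hBval 0 with h0 | h0 <;> rcases hBval (N - 1) with h1 | h1
        · rw [h0, h1]; norm_num
        · rw [h0, h1]; norm_num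
        · rw [h0, h1]; norm_num
        · exact absurd ⟨h0, h1⟩ hb0
      have hkBB : (k : ℤ) * (Bb (N - 1) + Bb 0) ≤ (k : ℤ) := by
        have h1 : (k : ℤ) * (Bb (N - 1) + Bb 0) ≤ (k : ℤ) * 1 :=
          mul_le_mul_of_nonneg_left (by linarith) (by linarith)
        linarith [h1]
      have h1 := hC01 0
      have h2 := hC01 (N - 1)
      linarith [hWlespan, hWsum, hEsum_nonneg]
  -- conversion to the stated goal
  have hTne : T.Nonempty := Finset.card_pos.mp (by rw [hTcard]; omega)
  have hlastlt : N - 1 < N := by omega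
  have h0lt : (0 : ℕ) < N := by omega
  have hsetEq : {p : Fin m × Fin n |
      (p.2 : ℕ) = 0 ∨ (p.2 : ℕ) = (n - 1) / 2 ∨ (p.2 : ℕ) = n - 1}
      = (↑S : Set (Fin m × Fin n)) := by
    ext p
    simp only [Set.mem_setOf_eq, Finset.mem_coe, hmemS, htri, Finset.mem_insert,
      Finset.mem_singleton, Fin.ext_iff, hv0, hvM, hvL]
    rw [← hk]
    have hnn : n - 1 = 2 * k := by omega
    rw [hnn]
  have himg : f '' (↑S : Set (Fin m × Fin n)) = (↑T : Set ℕ) := by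
    rw [hT, Finset.coe_image]
  rw [hsetEq, himg, hTne.csSup_eq_max', hTne.csInf_eq_min']
  have hmem : ∀ i : Fin N, f (σ i) ∈ T := fun i => by rw [hσf i]; exact (o i).2
  have hmax : T.max' hTne = f (σ ⟨N - 1, hlastlt⟩) := by
    apply le_antisymm
    · apply Finset.max'_le
      intro t ht
      have hti : t = f (σ (o.symm ⟨t, ht⟩)) := by rw [hσf]; simp
      rw [hti]
      set i := o.symm ⟨t, ht⟩ with hidef
      have hile : (i : ℕ) ≤ N - 1 := by have := i.isLt; omega
      rcases eq_or_lt_of_le hile with he | hl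
      · have hieq : i = ⟨N - 1, hlastlt⟩ := Fin.ext he
        rw [hieq]
      · have := hymono i ⟨N - 1, hlastlt⟩ (by rw [Fin.lt_def]; exact hl)
        exact_mod_cast le_of_lt this
    · exact Finset.le_max' T _ (hmem _)
  have hmin : T.min' hTne = f (σ ⟨0, h0lt⟩) := by
    apply le_antisymm
    · exact Finset.min'_le T _ (hmem _)
    · apply Finset.le_min'
      intro t ht
      have hti : t = f (σ (o.symm ⟨t, ht⟩)) := by rw [hσf]; simp
      rw [hti]
      set i := o.symm ⟨t, ht⟩ with hidef
      rcases Nat.eq_zero_or_pos (i : ℕ) with he | hl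
      · have hieq : i = ⟨0, h0lt⟩ := Fin.ext he
        rw [hieq]
      · have := hymono ⟨0, h0lt⟩ i (by rw [Fin.lt_def]; exact hl)
        exact_mod_cast le_of_lt this
  have hYN : Y (N - 1) = (f (σ ⟨N - 1, hlastlt⟩) : ℤ) := hYdef _ _
  have hY0 : Y 0 = (f (σ ⟨0, h0lt⟩) : ℤ) := hYdef _ _
  rw [hmax, hmin]
  have h2 : 2 * m * n = 4 * (m * k) + 2 * m := by rw [hn2k]; ring
  rw [h2]
  have h3 : (2 * ((m * k : ℕ) : ℤ) + 3 * (m : ℤ) - (k : ℤ) + 2)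
      ≤ (f (σ ⟨N - 1, hlastlt⟩) : ℤ) - (f (σ ⟨0, h0lt⟩) : ℤ) := by
    rw [← hYN, ← hY0]
    push_cast
    linarith [hmain]
  have h5 : k ≤ m * k := Nat.le_mul_of_pos_left k (by omega)
  generalize hP : m * k = P at h3 h5 ⊢
  omega
end
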